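/- arXiv:2010.06143 — 5 statements merged into one kernel-verified Lean document; each statement's English description precedes it below -/
import Mathlib

section
/- For permutations w in the symmetric group S_n and indices 1 ≤ i < j ≤ n, there is an edge w → w·(i,j) in the quantum Bruhat graph of type A_{n-1} (i.e., either the transposition (i,j) covers w in Bruhat order, giving ℓ(w·(i,j)) = ℓ(w)+1, or ℓ(w·(i,j)) = ℓ(w)+1-2(j-i)) if and only if there is no index l with i < l < j such that w(i) ≺ w(l) ≺ w(j) in the circular order starting at w(i). -/
open scoped Classical

noncomputable section

/-- The length (number of inversions) of a permutation in `S_n`. -/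
def lenA {n : ℕ} (w : Equiv.Perm (Fin n)) : ℕ :=
  (Finset.univ.filter (fun p : Fin n × Fin n => p.1 < p.2 ∧ w p.2 < w p.1)).card

/-- Bruhat edge `w → w·(i,j)` of the type `A_{n-1}` quantum Bruhat graph:
`ℓ(w·(i,j)) = ℓ(w) + 1`. -/
def bEdgeA {n : ℕ} (w : Equiv.Perm (Fin n)) (i j : Fin n) : Prop :=
  i < j ∧ lenA (w * Equiv.swap i j) = lenA w + 1

/-- Quantum edge `w → w·(i,j)`: `ℓ(w·(i,j)) = ℓ(w) + 1 - 2(j - i)`. -/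
def qEdgeA {n : ℕ} (w : Equiv.Perm (Fin n)) (i j : Fin n) : Prop :=
  i < j ∧ lenA (w * Equiv.swap i j) + 2 * ((j : ℕ) - (i : ℕ)) = lenA w + 1

/-- Edge of the quantum Bruhat graph `QB(S_n)` labeled by the transposition `(i,j)`. -/
def edgeA {n : ℕ} (w : Equiv.Perm (Fin n)) (i j : Fin n) : Prop :=
  bEdgeA w i j ∨ qEdgeA w i j

/-- `a ≺ b ≺ c` in the circular order on `{1,…,n}` starting at `a`. -/
def circB {n : ℕ} (a b c : Fin n) : Prop := b ≠ a ∧ b - a < c - a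

/-- `a ≺ʳ b ≺ʳ c` in the reverse circular order on `{1,…,n}` starting at `a`. -/
def circBR {n : ℕ} (a b c : Fin n) : Prop := b ≠ a ∧ a - b < a - c

/-!
Write `ℓ(w)` as the number of pairs `p₁ < p₂` with `w p₂ < w p₁`. Substituting `(t p₁, t p₂)`
for `p` shows that `ℓ(w t⁻¹) - ℓ(w)` is a sum over the inversions `p` of `t` of `+1` or `-1`,
according as `w` is ascending or descending on `p`. The inversions of the transposition `(i,j)`
are `(i,j)` and the pairs `(i,l)`, `(l,j)` with `i < l < j`, and such an `l` contributes
`2` if `w(i) ≺ w(l) ≺ w(j)`, minus `2` if `w(j) < w(i)`. Hence, with `c` the number of these `l`,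
`ℓ(w·(i,j)) = ℓ(w) + 1 + 2c` if `w(i) < w(j)` and `ℓ(w·(i,j)) = ℓ(w) + 1 - 2(j-i) + 2c` otherwise;
as `0 ≤ c < j - i`, there is an edge exactly when `c = 0`.
-/

open Equiv Finset

def inversions {n : ℕ} (w : Perm (Fin n)) : Finset (Fin n × Fin n) :=
  univ.filter fun p => p.1 < p.2 ∧ w p.2 < w p.1

def ascentSign {α : Type*} [LinearOrder α] (x y : α) : ℤ :=
  if y < x then -1 else 1

lemma circB_iff {n : ℕ} {a b c : Fin n} :
    circB a b c ↔ a < b ∧ b < c ∨ b < c ∧ c < a ∨ c < a ∧ a < b := by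
  have hb := Fin.intCast_val_sub_eq_sub_add_ite b a
  have hc := Fin.intCast_val_sub_eq_sub_add_ite c a
  rw [circB, Fin.lt_def, Fin.ne_iff_vne]
  split_ifs at hb hc <;> fin_omega

lemma ascentSign_add_ascentSign {n : ℕ} {a b c : Fin n} (hab : a ≠ b) (hbc : b ≠ c) :
    ascentSign a b + ascentSign b c =
      2 * (if circB a b c then 1 else 0) - 2 * (if c < a then 1 else 0) := by
  rw [ascentSign, ascentSign, circB_iff]
  split_ifs <;> fin_omega

lemma lenA_mul_inv {n : ℕ} (w t : Perm (Fin n)) :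
    (lenA (w * t⁻¹) : ℤ) = lenA w + ∑ p ∈ inversions t, ascentSign (w p.1) (w p.2) := by
  -- The last two summands count the inversions of `t` on which `w` ascends, in either
  -- orientation of the pair, so they cancel after summation (`hflip`).
  have hpoint (p : Fin n × Fin n) :
      (if t p.1 < t p.2 ∧ w p.2 < w p.1 then 1 else 0 : ℤ) =
        (if p.1 < p.2 ∧ w p.2 < w p.1 then 1 else 0) +
        (if p.1 < p.2 ∧ t p.2 < t p.1 then ascentSign (w p.1) (w p.2) else 0) -
        (if p.1 < p.2 ∧ t p.2 < t p.1 ∧ w p.1 < w p.2 then 1 else 0) +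
        (if p.2 < p.1 ∧ t p.1 < t p.2 ∧ w p.2 < w p.1 then 1 else 0) := by
    obtain ⟨a, b⟩ := p
    rcases eq_or_ne a b with rfl | hab
    · simp
    have := w.injective.ne hab
    have := t.injective.ne hab
    rw [ascentSign]
    split_ifs <;> fin_omega
  have hmul : (lenA (w * t⁻¹) : ℤ) = ∑ p : Fin n × Fin n,
      if t p.1 < t p.2 ∧ w p.2 < w p.1 then 1 else 0 := by
    rw [lenA, card_filter, Nat.cast_sum, ← (t.prodCongr t).sum_comp]
    simp
  have hflip : ∑ p : Fin n × Fin n,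
      (if p.1 < p.2 ∧ t p.2 < t p.1 ∧ w p.1 < w p.2 then 1 else 0 : ℤ) =
      ∑ p : Fin n × Fin n, if p.2 < p.1 ∧ t p.1 < t p.2 ∧ w p.2 < w p.1 then 1 else 0 :=
    ((prodComm _ _).sum_comp _).symm
  rw [hmul, sum_congr rfl fun p _ => hpoint p, sum_add_distrib, sum_sub_distrib, sum_add_distrib,
    hflip, lenA, card_filter, Nat.cast_sum, inversions, sum_filter]
  push_cast
  ring

lemma inversions_swap {n : ℕ} {i j : Fin n} (hij : i < j) :
    inversions (swap i j) =
      insert (i, j) ((Ioo i j).image (i, ·) ∪ (Ioo i j).image (·, j)) := by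
  ext ⟨a, b⟩
  simp only [inversions, mem_filter, mem_univ, true_and, mem_insert, mem_union, mem_image,
    mem_Ioo, Prod.mk.injEq]
  rw [swap_apply_def, swap_apply_def]
  constructor
  · intro h
    split_ifs at h <;> grind
  · rintro (⟨rfl, rfl⟩ | ⟨l, ⟨hil, hlj⟩, rfl, rfl⟩ | ⟨l, ⟨hil, hlj⟩, rfl, rfl⟩) <;>
      split_ifs <;> grind

lemma sum_inversions_swap {n : ℕ} {M : Type*} [AddCommMonoid M] {i j : Fin n} (hij : i < j)
    (f : Fin n × Fin n → M) :
    ∑ p ∈ inversions (swap i j), f p = f (i, j) + ∑ l ∈ Ioo i j, (f (i, l) + f (l, j)) := by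
  have hdisj : Disjoint ((Ioo i j).image (i, ·)) ((Ioo i j).image (·, j)) := by
    simp only [disjoint_left, mem_image, mem_Ioo]
    grind
  rw [inversions_swap hij, sum_insert (by simp), sum_union hdisj,
    sum_image (Prod.mk_right_injective i).injOn, sum_image (Prod.mk_left_injective j).injOn,
    sum_add_distrib]

lemma lenA_mul_swap {n : ℕ} (w : Perm (Fin n)) {i j : Fin n} (hij : i < j) :
    (lenA (w * swap i j) : ℤ) =
      lenA w + 1 - (if w j < w i then 2 * ((j : ℕ) - (i : ℕ) : ℤ) else 0) +
        2 * #{l ∈ Ioo i j | circB (w i) (w l) (w j)} := by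
  have hcirc : ∑ l ∈ Ioo i j, (ascentSign (w i) (w l) + ascentSign (w l) (w j)) =
      2 * #{l ∈ Ioo i j | circB (w i) (w l) (w j)} -
        2 * (if w j < w i then 1 else 0) * ((j : ℕ) - (i : ℕ) - 1 : ℕ) := by
    rw [sum_congr rfl fun l hl => ascentSign_add_ascentSign
      (w.injective.ne (mem_Ioo.1 hl).1.ne) (w.injective.ne (mem_Ioo.1 hl).2.ne),
      sum_sub_distrib, ← mul_sum, ← mul_sum, sum_boole, sum_const, Fin.card_Ioo]
    simp [mul_comm]
  have hij' : (i : ℕ) < j := hij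
  rw [← swap_inv, lenA_mul_inv, sum_inversions_swap hij, hcirc, ascentSign]
  split_ifs <;> omega

/-- For `w ∈ S_n` and `i < j`, there is an edge `w → w·(i,j)` in the
type `A_{n-1}` quantum Bruhat graph if and only if there is no `l` with `i < l < j`
and `w(i) ≺ w(l) ≺ w(j)` in the circular order starting at `w(i)`. -/
theorem stmt0 {n : ℕ} (w : Equiv.Perm (Fin n)) (i j : Fin n) (hij : i < j) :
    edgeA w i j ↔ ¬ ∃ l : Fin n, i < l ∧ l < j ∧ circB (w i) (w l) (w j) := by
  have hlen := lenA_mul_swap w hij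
  have hbound : #{l ∈ Ioo i j | circB (w i) (w l) (w j)} ≤ (j : ℕ) - i - 1 :=
    (card_filter_le _ _).trans (Fin.card_Ioo i j).le
  have hnone : (¬ ∃ l, i < l ∧ l < j ∧ circB (w i) (w l) (w j)) ↔
      #{l ∈ Ioo i j | circB (w i) (w l) (w j)} = 0 := by
    simp [card_eq_zero, filter_eq_empty_iff]
  have hij' : (i : ℕ) < j := hij
  rw [hnone, edgeA, bEdgeA, qEdgeA]
  split_ifs at hlen <;> omega
end
end

section
/- Fix n, k with 1 ≤ k ≤ n-1 and w ∈ S_n with Γ_w nonempty, where Γ_w = {(i,j) : i ≤ k < j, w → w·(i,j) is a quantum edge of QB(S_n)}. Define recursively (p_1,q_1) := max_⪯ Γ_w and (p_{l+1},q_{l+1}) := max_⪯ {(a,b) ∈ Γ_w : p_l < a ≤ k < b < q_l}, terminating at step L when this set is empty. Then the sequence of transpositions (p_1,q_1), ..., (p_L,q_L), applied in this order starting from w, yields a directed path in QB(S_n) all of whose steps are quantum edges. -/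
open scoped Classical

noncomputable section

/-- `mid k i j`: the (0-indexed) pair `(i,j)` corresponds to a 1-indexed pair
`(i+1, j+1)` with `i+1 ≤ k < j+1`. -/
def midA {n : ℕ} (k : ℕ) (i j : Fin n) : Prop := (i : ℕ) < k ∧ k ≤ (j : ℕ)

/-- The set `Γ_v` of pairs `(i,j)` with `i ≤ k < j` (1-indexed) such that
`v → v·(i,j)` is a quantum edge of `QB(S_n)`. -/
def GammaSet {n : ℕ} (k : ℕ) (v : Equiv.Perm (Fin n)) : Set (Fin n × Fin n) :=
  {p | midA k p.1 p.2 ∧ qEdgeA v p.1 p.2}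

/-- The partial order `(a,b) ⪯ (c,d) ↔ c ≤ a ≤ k < b ≤ d` (1-indexed). -/
def preA {n : ℕ} (k : ℕ) (p q : Fin n × Fin n) : Prop :=
  q.1 ≤ p.1 ∧ (p.1 : ℕ) < k ∧ k ≤ (p.2 : ℕ) ∧ p.2 ≤ q.2

/-- `m` is the maximum of `S` with respect to `⪯`. -/
def isMaxOf {n : ℕ} (k : ℕ) (S : Set (Fin n × Fin n)) (m : Fin n × Fin n) : Prop :=
  m ∈ S ∧ ∀ x ∈ S, preA k x m

/-- `m` is the minimum of `S` with respect to `⪯`. -/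
def isMinOf {n : ℕ} (k : ℕ) (S : Set (Fin n × Fin n)) (m : Fin n × Fin n) : Prop :=
  m ∈ S ∧ ∀ x ∈ S, preA k m x

/-- `QPathA k w L`: `L` is the list of labels of a directed path in `QB(S_n)`
starting at `w`, all of whose labels `(i,j)` satisfy `i ≤ k < j` (1-indexed) and all
of whose steps are quantum edges. -/
def QPathA {n : ℕ} (k : ℕ) : Equiv.Perm (Fin n) → List (Fin n × Fin n) → Prop
  | _, [] => True
  | w, p :: L => midA k p.1 p.2 ∧ qEdgeA w p.1 p.2 ∧ QPathA k (w * Equiv.swap p.1 p.2) L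

/-- `GreedyList k w S L`: `L` is the list obtained by the greedy recursion
`(p_1,q_1) = max_⪯ S`, `(p_{l+1},q_{l+1}) = max_⪯ {(a,b) ∈ Γ_w : p_l < a ≤ k < b < q_l}`,
terminating when the candidate set is empty. -/
def GreedyList {n : ℕ} (k : ℕ) (w : Equiv.Perm (Fin n)) :
    Set (Fin n × Fin n) → List (Fin n × Fin n) → Prop
  | S, [] => S = ∅
  | S, p :: L =>
      isMaxOf k S p ∧
      GreedyList k w {x ∈ GammaSet k w | p.1 < x.1 ∧ x.2 < p.2} L

/-! Whether `v → v·(a,b)` is a quantum edge depends only on `ℓ(v·(a,b)) - ℓ(v)`, and right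
multiplication by `(a,b)` changes the relative order of a pair of positions only if both lie in
`[a,b]`; so this difference depends only on the values of `v` on `[a,b]`. Every later pair of the
greedy sequence is strictly nested inside all earlier ones, so the transpositions applied before it
fix its interval pointwise, and the quantum edge of `w` it comes from survives. -/

open Equiv Set

theorem swap_apply_lt_swap_apply_iff {α : Type*} [LinearOrder α] {a b i j : α} (hab : a ≤ b)
    (h : ¬(i ∈ Icc a b ∧ j ∈ Icc a b)) : swap a b i < swap a b j ↔ i < j := by
  simp only [mem_Icc, not_and_or, not_le] at h
  rw [swap_apply_def, swap_apply_def]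
  split_ifs <;> subst_vars <;> grind

theorem lenA_eq_sum {n : ℕ} (v : Perm (Fin n)) :
    lenA v = ∑ x : Fin n × Fin n, if x.1 < x.2 ∧ v x.2 < v x.1 then 1 else 0 :=
  Finset.card_filter _ _

theorem lenA_mul_swap_eq_sum {n : ℕ} (v : Perm (Fin n)) (a b : Fin n) :
    lenA (v * swap a b) =
      ∑ x : Fin n × Fin n, if swap a b x.1 < swap a b x.2 ∧ v x.2 < v x.1 then 1 else 0 := by
  rw [lenA_eq_sum, ← Equiv.sum_comp ((swap a b).prodCongr (swap a b))]
  simp only [prodCongr_apply, Prod.map_fst, Prod.map_snd, Perm.mul_apply, swap_apply_self]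

theorem lenA_mul_swap_add_lenA {n : ℕ} {v v' : Perm (Fin n)} {a b : Fin n} (hab : a ≤ b)
    (h : EqOn v v' (Icc a b)) :
    lenA (v * swap a b) + lenA v' = lenA v + lenA (v' * swap a b) := by
  rw [lenA_mul_swap_eq_sum, lenA_mul_swap_eq_sum, lenA_eq_sum, lenA_eq_sum,
    ← Finset.sum_add_distrib, ← Finset.sum_add_distrib]
  refine Finset.sum_congr rfl fun x _ => ?_
  by_cases hx : x.1 ∈ Icc a b ∧ x.2 ∈ Icc a b
  · rw [h hx.1, h hx.2, add_comm]
  · simp only [swap_apply_lt_swap_apply_iff hab hx]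

theorem qEdgeA.of_eqOn {n : ℕ} {v v' : Perm (Fin n)} {a b : Fin n} (hq : qEdgeA v a b)
    (h : EqOn v v' (Icc a b)) : qEdgeA v' a b := by
  obtain ⟨hab, hq⟩ := hq
  have := lenA_mul_swap_add_lenA hab.le h
  exact ⟨hab, by omega⟩

theorem eqOn_mul_swap_of_lt_of_lt {α : Type*} [LinearOrder α] (v : Perm α) {p q a b : α}
    (hpa : p < a) (hbq : b < q) : EqOn (v * swap p q) v (Icc a b) := fun i hi => by
  rw [Perm.mul_apply, swap_apply_of_ne_of_ne (hpa.trans_le hi.1).ne' (hi.2.trans_lt hbq).ne]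

theorem qPathA_of_greedyList {n k : ℕ} {w v : Perm (Fin n)} {S : Set (Fin n × Fin n)}
    {L : List (Fin n × Fin n)} (hL : GreedyList k w S L)
    (hS : ∀ x ∈ S, x ∈ GammaSet k w ∧ EqOn v w (Icc x.1 x.2)) : QPathA k v L := by
  induction L generalizing v S with
  | nil => trivial
  | cons p L ih =>
    obtain ⟨⟨hpS, -⟩, hL⟩ := hL
    obtain ⟨⟨hp, hpw⟩, hpv⟩ := hS p hpS
    refine ⟨hp, hpw.of_eqOn hpv.symm, ih hL ?_⟩
    rintro x ⟨hx, hpx, hxp⟩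
    refine ⟨hx, fun i hi => ?_⟩
    have hi' : i ∈ Icc p.1 p.2 := ⟨hpx.le.trans hi.1, hi.2.trans hxp.le⟩
    rw [eqOn_mul_swap_of_lt_of_lt v hpx hxp hi, hpv hi']

theorem stmt11_general {n k : ℕ}
    (w : Equiv.Perm (Fin n))
    (L : List (Fin n × Fin n)) (hL : GreedyList k w (GammaSet k w) L) :
    QPathA k w L :=
  qPathA_of_greedyList hL fun _ hx => ⟨hx, eqOn_refl _ _⟩

/-- The greedy sequence `(p_1,q_1), …, (p_L,q_L)` extracted from
`Γ_w` yields, when applied in order starting at `w`, a directed path in `QB(S_n)`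
all of whose steps are quantum edges. -/
theorem stmt11 {n k : ℕ} (hk1 : 1 ≤ k) (hk2 : k ≤ n - 1)
    (w : Equiv.Perm (Fin n)) (hne : (GammaSet k w).Nonempty)
    (L : List (Fin n × Fin n)) (hL : GreedyList k w (GammaSet k w) L) :
    QPathA k w L :=
  stmt11_general w L hL
end
end

section
/- Fix n, k with 1 ≤ k ≤ n-1. For any w ∈ S_n and any path in QB(S_n) starting at w whose quantum-edge labels are (p_1',q_1'), ..., (p_m',q_m') (all of the form i ≤ k < j, nested with (p_m',q_m') innermost), the total degree sum Σ_t (q_t' - p_t') is at most k(n-k). The bound k'(n-k') for k' = min(k, n-k) is attained by the path starting at w(i) = n+1-i (the longest element) with labels (1,n), (2,n-1), ..., (k', n+1-k'), all of which are quantum edges. -/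
open scoped Classical

noncomputable section

/-!
The left ends of nested labels are distinct points of `[0, k)` and the right ends distinct points
of `[k, n)`, so a nested path has `m ≤ min k (n - k)` labels; nesting also forces the `t`-th label
(from the outside) to have span at most `n + 1 - 2t`, whence the degree is at most
`m (n - m) ≤ k (n - k)`.

For the extremal path, let `v_t` reverse the positions `t, …, n - 1 - t` (so `v_0 = w₀`). Then
`v_t · (t, n - 1 - t) = v_{t+1}` and `ℓ(v_t) = C(s + 2, 2)` with `s = n - 2t - 2`, which exceeds
`ℓ(v_{t+1}) = C(s, 2)` by `2s + 1 = 2(n - 1 - 2t) - 1`: every step is a quantum edge.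
-/

section Nested

variable {ι : Type*}

theorem List.length_le_sub_of_pairwise_lt {f : ι → ℕ} {L : List ι} {a b : ℕ}
    (hL : L.Pairwise fun x y => f x < f y) (hf : ∀ x ∈ L, a ≤ f x ∧ f x < b) :
    L.length ≤ b - a := by
  have hnd : (L.map f).Nodup := List.pairwise_map.2 (hL.imp ne_of_lt)
  calc L.length = (L.map f).toFinset.card := by
        rw [List.toFinset_card_of_nodup hnd, List.length_map]
    _ ≤ (Finset.Ico a b).card := Finset.card_le_card fun y hy => by
        obtain ⟨x, hx, rfl⟩ := List.mem_map.1 (List.mem_toFinset.1 hy)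
        exact Finset.mem_Ico.2 (hf x hx)
    _ = b - a := Nat.card_Ico a b

theorem List.sum_span_add_length_sq_le_of_nested (lo hi : ι → ℕ) :
    ∀ (L : List ι) {a b : ℕ}, L.Pairwise (fun x y => lo x < lo y ∧ hi y < hi x) →
      (∀ x ∈ L, a ≤ lo x ∧ lo x < hi x ∧ hi x < b) →
      (L.map fun x => hi x - lo x).sum + L.length ^ 2 ≤ L.length * (b - a)
  | [], _, _, _, _ => by simp
  | x :: T, a, b, hL, hmem => by
    obtain ⟨hxT, hT⟩ := List.pairwise_cons.1 hL
    obtain ⟨hax, hx, hxb⟩ := hmem x List.mem_cons_self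
    have ih := List.sum_span_add_length_sq_le_of_nested lo hi T (a := lo x + 1) (b := hi x) hT
      fun y hy => ⟨(hxT y hy).1, (hmem y (List.mem_cons_of_mem x hy)).2.1, (hxT y hy).2⟩
    simp only [List.map_cons, List.sum_cons, List.length_cons]
    set m := T.length
    have hspan : (m + 1) * (hi x - lo x + 1) ≤ (m + 1) * (b - a) := by gcongr; omega
    zify [hx.le, hax.trans (hx.trans hxb).le, show lo x + 1 ≤ hi x from hx] at ih hspan ⊢
    nlinarith

end Nested

theorem QPathA.midA_of_mem {n k : ℕ} :
    ∀ {w : Equiv.Perm (Fin n)} {L : List (Fin n × Fin n)}, QPathA k w L →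
      ∀ p ∈ L, midA k p.1 p.2
  | _, [], _, _, hp => absurd hp List.not_mem_nil
  | _, _ :: _, hQ, _, hp => (List.mem_cons.1 hp).elim (· ▸ hQ.1) (hQ.2.2.midA_of_mem _)

theorem QPathA.sum_span_le_of_nested {n k : ℕ} {w : Equiv.Perm (Fin n)}
    {L : List (Fin n × Fin n)} (hQ : QPathA k w L)
    (hL : L.Pairwise fun p q => p.1 < q.1 ∧ q.2 < p.2) :
    (L.map fun p => (p.2 : ℕ) - (p.1 : ℕ)).sum ≤ k * (n - k) := by
  have hmid := hQ.midA_of_mem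
  have hsum := List.sum_span_add_length_sq_le_of_nested (fun p => (p.1 : ℕ)) (fun p => (p.2 : ℕ))
    L (a := 0) (b := n) hL fun p hp => ⟨Nat.zero_le _, (hmid p hp).1.trans_le (hmid p hp).2, p.2.isLt⟩
  have hlen_left : L.length ≤ k - 0 := List.length_le_sub_of_pairwise_lt
    (hL.imp And.left) fun p hp => ⟨Nat.zero_le _, (hmid p hp).1⟩
  have hlen_right : L.reverse.length ≤ n - k := List.length_le_sub_of_pairwise_lt
    (List.pairwise_reverse.2 (hL.imp And.right))
    fun p hp => ⟨(hmid p (List.mem_reverse.1 hp)).2, p.2.isLt⟩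
  rw [List.length_reverse] at hlen_right
  rw [Nat.sub_zero] at hsum hlen_left
  obtain ⟨x, hx⟩ : ∃ x, k = L.length + x := ⟨k - L.length, by omega⟩
  obtain ⟨y, hy⟩ : ∃ y, n - k = L.length + y := ⟨n - k - L.length, by omega⟩
  have hn : n ≤ k + (n - k) := le_add_tsub
  rw [hy, hx] at hn ⊢
  nlinarith

section Staircase

variable {n : ℕ}

def revInner (n t : ℕ) : Equiv.Perm (Fin n) :=
  Function.Involutive.toPerm
    (fun i => if t ≤ (i : ℕ) ∧ (i : ℕ) + t < n then ⟨n - 1 - i, by omega⟩ else i) fun i => by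
      dsimp only
      split_ifs <;> ext <;> simp_all only [not_and, not_lt] <;> omega

theorem revInner_apply (t : ℕ) (i : Fin n) :
    revInner n t i = if t ≤ (i : ℕ) ∧ (i : ℕ) + t < n then ⟨n - 1 - i, by omega⟩ else i :=
  rfl

theorem revInner_zero : revInner n 0 = Fin.revPerm := by
  ext i
  simp only [revInner_apply, zero_le, add_zero, Fin.is_lt, and_self, if_true, Fin.revPerm_apply,
    Fin.val_rev]
  omega

theorem lenA_revInner {t : ℕ} (ht : 2 * t ≤ n) (hn : 0 < n) :
    lenA (revInner n t) = (n - 2 * t).choose 2 := by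
  have hblock : ({p | p.1 < p.2 ∧ revInner n t p.2 < revInner n t p.1} : Finset (Fin n × Fin n))
      = {p ∈ Finset.Icc (⟨t, by omega⟩ : Fin n) ⟨n - 1 - t, by omega⟩ ×ˢ
          Finset.Icc (⟨t, by omega⟩ : Fin n) ⟨n - 1 - t, by omega⟩ | p.1 < p.2} := by
    ext ⟨i, j⟩
    simp only [Finset.mem_filter, Finset.mem_univ, true_and, Finset.mem_product,
      Finset.mem_Icc, revInner_apply, Fin.lt_def, Fin.le_def, apply_ite Fin.val]
    split_ifs <;> omega
  rw [lenA, hblock, Finset.card_product_filter_lt, Fin.card_Icc]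
  congr 1
  dsimp only
  omega

theorem revInner_mul_swap {t : ℕ} (ht : 2 * t + 2 ≤ n) :
    revInner n t * Equiv.swap ⟨t, by omega⟩ ⟨n - 1 - t, by omega⟩ = revInner n (t + 1) := by
  ext i
  simp only [Equiv.Perm.mul_apply, Equiv.swap_apply_def, revInner_apply, Fin.ext_iff,
    apply_ite Fin.val]
  split_ifs <;> omega

theorem qEdgeA_revInner {t : ℕ} (ht : 2 * t + 2 ≤ n) :
    qEdgeA (revInner n t) ⟨t, by omega⟩ ⟨n - 1 - t, by omega⟩ := by
  refine ⟨Fin.mk_lt_mk.2 (by omega), ?_⟩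
  obtain ⟨s, hs⟩ : ∃ s, n - 2 * t = s + 2 := ⟨n - 2 * t - 2, by omega⟩
  rw [revInner_mul_swap ht, lenA_revInner (by omega) (by omega), lenA_revInner (by omega) (by omega),
    hs, show n - 2 * (t + 1) = s by omega]
  have hchoose : (s + 2).choose 2 = s.choose 2 + 2 * s + 1 := by
    simp only [Nat.choose_succ_succ', Nat.choose_zero_right, Nat.choose_one_right, Nat.reduceAdd]; ring
  simp only [hchoose]
  omega

/-- The reductions mod `n` only make the label `(t, n - 1 - t)` well typed; they are vacuous for
`t < n`. -/
def nestedLabel (hn : 0 < n) (t : ℕ) : Fin n × Fin n :=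
  (⟨t % n, Nat.mod_lt _ hn⟩, ⟨(n - 1 - t) % n, Nat.mod_lt _ hn⟩)

theorem nestedLabel_of_lt (hn : 0 < n) {t : ℕ} (ht : t < n) :
    nestedLabel hn t = (⟨t, ht⟩, ⟨n - 1 - t, by omega⟩) := by
  simp only [nestedLabel, Nat.mod_eq_of_lt ht, Nat.mod_eq_of_lt (show n - 1 - t < n by omega)]

theorem qPathA_revInner (hn : 0 < n) {k : ℕ} :
    ∀ {c t : ℕ}, t + c ≤ k → k + t + c ≤ n →
      QPathA k (revInner n t) ((List.range' t c).map (nestedLabel hn))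
  | 0, _, _, _ => trivial
  | c + 1, t, hk, hnk => by
    rw [List.range'_succ, List.map_cons, nestedLabel_of_lt hn (by omega)]
    refine ⟨⟨by simp only; omega, by simp only; omega⟩, qEdgeA_revInner (by omega), ?_⟩
    rw [revInner_mul_swap (by omega)]
    exact qPathA_revInner hn (by omega) (by omega)

theorem sum_span_nestedLabel (hn : 0 < n) :
    ∀ {m : ℕ}, 2 * m ≤ n →
      (((List.range m).map (nestedLabel hn)).map fun p => (p.2 : ℕ) - (p.1 : ℕ)).sum = m * (n - m)
  | 0, _ => by simp
  | m + 1, hm => by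
    rw [List.range_succ, List.map_append, List.map_append, List.sum_append,
      sum_span_nestedLabel hn (by omega), List.map_singleton, List.map_singleton,
      nestedLabel_of_lt hn (by omega), List.sum_singleton]
    obtain ⟨r, rfl⟩ : ∃ r, n = 2 * m + 2 + r := ⟨n - 2 * m - 2, by omega⟩
    simp only
    rw [show 2 * m + 2 + r - m = m + 2 + r by omega, show 2 * m + 2 + r - 1 - m - m = r + 1 by omega,
      show 2 * m + 2 + r - (m + 1) = m + 1 + r by omega]
    ring

end Staircase

/-- For any path in `QB(S_n)` starting at `w` all of whose steps
are quantum edges with nested labels `(i,j)`, `i ≤ k < j`, the total degree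
`Σ (j - i)` is at most `k(n-k)`; the bound `k'(n-k')` for `k' = min(k, n-k)` is
attained by the path starting at the longest element with labels
`(1,n), (2,n-1), …, (k', n+1-k')` (1-indexed), all of which are quantum edges. -/
theorem stmt12 {n k : ℕ} (hk1 : 1 ≤ k) (hk2 : k ≤ n - 1) :
    (∀ (w : Equiv.Perm (Fin n)) (L : List (Fin n × Fin n)),
      QPathA k w L →
      List.Pairwise (fun p q : Fin n × Fin n => p.1 < q.1 ∧ q.2 < p.2) L →
      (L.map (fun p : Fin n × Fin n => (p.2 : ℕ) - (p.1 : ℕ))).sum ≤ k * (n - k)) ∧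
    (∀ L : List (Fin n × Fin n),
      L = (List.range (min k (n - k))).map
        (fun t => ((⟨t % n, Nat.mod_lt _ (by omega)⟩ : Fin n),
                   (⟨(n - 1 - t) % n, Nat.mod_lt _ (by omega)⟩ : Fin n))) →
      QPathA k (Fin.revPerm : Equiv.Perm (Fin n)) L ∧
      (L.map (fun p : Fin n × Fin n => (p.2 : ℕ) - (p.1 : ℕ))).sum
        = min k (n - k) * (n - min k (n - k))) := by
  have hn : 0 < n := by omega
  refine ⟨fun w L hQ hL => hQ.sum_span_le_of_nested hL, fun L hL => ?_⟩
  obtain rfl : L = (List.range (min k (n - k))).map (nestedLabel hn) := hL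
  refine ⟨?_, sum_span_nestedLabel hn (by omega)⟩
  rw [← revInner_zero, List.range_eq_range']
  exact qPathA_revInner hn (by omega) (by omega)
end
end

section
/- Fix n, k and v ∈ S_n, and let σW_J be a coset of the parabolic subgroup W_J of S_n with J = I \ {k} (so W_J = S_k × S_{n-k} acting on positions). Then there exists a unique w ∈ σW_J satisfying: for every pair k+1 ≤ j < i ≤ n, it is false that v(i) = w(j) and false that w(j) lies strictly between v(i) and w(i) in the circular order starting at v(i) (Condition on the last n-k positions), and the analogous condition with the reverse circular order on the first k positions. -/
/-!
Within each block of positions the conditions say exactly that, for `j < i`, `w i` precedes `w j`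
in the circular order starting at `v i` (reversed on the first block). Read from the last position
backwards, this forces `w i` to be the first remaining value of the block in that order, which
gives existence. For uniqueness, at the last position where two solutions differ, each of the two
values would have to precede the other.
-/

open scoped Classical

noncomputable section

open Equiv Function Finset

section Greedy

variable {α β : Type*} [LinearOrder α] [LinearOrder β] {key : α → α → β}

def IsGreedyOn (key : α → α → β) (S : Set α) (g : α → α) : Prop :=
  ∀ i ∈ S, ∀ j ∈ S, j < i → key i (g i) < key i (g j)

theorem IsGreedyOn.congr {S : Set α} {g g' : α → α} (hg : IsGreedyOn key S g)
    (h : Set.EqOn g g' S) : IsGreedyOn key S g' := by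
  intro i hi j hj hji
  rw [← h hi, ← h hj]
  exact hg i hi j hj hji

theorem IsGreedyOn.update_insert {S : Set α} {g : α → α} {a t : α} (hg : IsGreedyOn key S g)
    (hlt : ∀ x ∈ S, x < a) (hmin : ∀ x ∈ S, key a t < key a (g x)) :
    IsGreedyOn key (insert a S) (update g a t) := by
  have hne : ∀ x ∈ S, x ≠ a := fun x hx => (hlt x hx).ne
  rintro i (rfl | hi) j (rfl | hj) hji
  · exact (lt_irrefl _ hji).elim
  · simpa [hne j hj] using hmin j hj
  · exact absurd hji (hlt i hi).not_gt
  · simpa [hne i hi, hne j hj] using hg i hi j hj hji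

theorem exists_isGreedyOn (hkey : ∀ i, Injective (key i)) (S : Finset α) {T : Finset α}
    (hST : #S = #T) : ∃ g : α → α, Set.MapsTo g S T ∧ Set.InjOn g S ∧ IsGreedyOn key S g := by
  induction S using Finset.induction_on_max generalizing T with
  | empty => exact ⟨id, by simp [Set.MapsTo], by simp, by simp [IsGreedyOn]⟩
  | insert a S hlt ih =>
    have haS : a ∉ S := fun h => (hlt a h).false
    have hT : T.Nonempty := card_pos.1 (hST ▸ card_pos.2 (insert_nonempty a S))
    obtain ⟨t, htT, htmin⟩ := T.exists_min_image (key a) hT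
    obtain ⟨g, hgT, hginj, hg⟩ := ih (T := T.erase t)
      (by rw [card_erase_of_mem htT, ← hST, card_insert_of_notMem haS, Nat.add_sub_cancel])
    have hgt : ∀ x ∈ S, g x ≠ t := fun x hx => ne_of_mem_erase (hgT hx)
    have hupd : Set.EqOn (update g a t) g S := fun x hx => update_of_ne (hlt x hx).ne _ _
    rw [coe_insert]
    refine ⟨update g a t, ?_, ?_, hg.update_insert hlt fun x hx => ?_⟩
    · rintro x (rfl | hx)
      · simpa using htT
      · rw [hupd hx]; exact mem_of_mem_erase (hgT hx)
    · refine (Set.injOn_insert (mod_cast haS)).2 ⟨hginj.congr hupd.symm, ?_⟩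
      rintro ⟨x, hx, hxa⟩
      rw [hupd hx, update_self] at hxa
      exact hgt x hx hxa
    · exact (htmin _ (mem_of_mem_erase (hgT hx))).lt_of_ne ((hkey a).ne (hgt x hx).symm)

theorem IsGreedyOn.key_lt_of_eqOn_Ioi {S T : Set α} {g g' : α → α} {a : α}
    (hg : IsGreedyOn key S g) (hgT : Set.SurjOn g S T) (hg'T : Set.MapsTo g' S T)
    (hg' : Set.InjOn g' S) (ha : a ∈ S) (hne : g a ≠ g' a)
    (hagree : Set.EqOn g g' (S ∩ Set.Ioi a)) : key a (g a) < key a (g' a) := by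
  obtain ⟨j, hj, hgj⟩ := hgT (hg'T ha)
  rcases lt_trichotomy j a with hja | rfl | haj
  · rw [← hgj]; exact hg a ha j hj hja
  · exact absurd hgj hne
  · exact absurd (hg' hj ha ((hagree ⟨hj, haj⟩).symm.trans hgj)) haj.ne'

theorem IsGreedyOn.eqOn {S T : Finset α} (hTS : #T ≤ #S) {g g' : α → α}
    (hgT : Set.MapsTo g S T) (hginj : Set.InjOn g S) (hg : IsGreedyOn key S g)
    (hg'T : Set.MapsTo g' S T) (hg'inj : Set.InjOn g' S) (hg' : IsGreedyOn key S g') :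
    Set.EqOn g g' S := by
  by_contra hne
  obtain ⟨a, ha, hmax⟩ := (S.filter fun i => g i ≠ g' i).exists_max_image id <| by
    simpa [Set.EqOn, filter_nonempty_iff] using hne
  rw [mem_filter] at ha
  have hagree : Set.EqOn g g' (S ∩ Set.Ioi a) := fun i ⟨hi, hai⟩ =>
    by_contra fun h => (hmax i (mem_filter.2 ⟨hi, h⟩)).not_gt hai
  exact (hg.key_lt_of_eqOn_Ioi (surjOn_of_injOn_of_card_le g hgT hginj hTS) hg'T hg'inj ha.1
    ha.2 hagree).asymm (hg'.key_lt_of_eqOn_Ioi (surjOn_of_injOn_of_card_le g' hg'T hg'inj hTS)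
    hgT hginj ha.1 (Ne.symm ha.2) hagree.symm)

end Greedy

theorem exists_perm_eqOn_of_mapsTo {α : Type*} [Finite α] {S T : Set α} {g₁ g₂ : α → α}
    (hg₁T : Set.MapsTo g₁ S T) (hg₁ : Set.InjOn g₁ S) (hg₂T : Set.MapsTo g₂ Sᶜ Tᶜ)
    (hg₂ : Set.InjOn g₂ Sᶜ) : ∃ w : Perm α, Set.EqOn w g₁ S ∧ Set.EqOn w g₂ Sᶜ := by
  have hinj : Injective (S.piecewise g₁ g₂) :=
    (S.injective_piecewise_iff).2 ⟨hg₁, hg₂, fun x hx y hy h => hg₂T hy (h ▸ hg₁T hx)⟩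
  exact ⟨Equiv.ofBijective _ (Finite.injective_iff_bijective.1 hinj),
    S.piecewise_eqOn g₁ g₂, S.piecewise_eqOn_compl g₁ g₂⟩

theorem exists_perm_mul_iff {α : Type*} (p : α → Prop) (σ w : Perm α) :
    (∃ u : Perm α, (∀ i, p i ↔ p (u i)) ∧ w = σ * u) ↔ ∀ i, p i ↔ p (σ⁻¹ (w i)) := by
  constructor
  · rintro ⟨u, hu, rfl⟩ i
    simpa using hu i
  · exact fun h => ⟨σ⁻¹ * w, h, (mul_inv_cancel_left σ w).symm⟩

section Perm

variable {α β : Type*} [Fintype α] [LinearOrder α] [LinearOrder β] {key₁ key₂ : α → α → β}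

theorem existsUnique_perm_isGreedyOn (h₁ : ∀ i, Injective (key₁ i))
    (h₂ : ∀ i, Injective (key₂ i)) {S T : Finset α} (hST : #S = #T) :
    ∃! w : Perm α, (∀ i, i ∈ S ↔ w i ∈ T) ∧
      IsGreedyOn key₁ S w ∧ IsGreedyOn key₂ ↑Sᶜ w := by
  have hSTc : #Sᶜ = #Tᶜ := by rw [card_compl, card_compl, hST]
  refine existsUnique_of_exists_of_unique ?_ ?_
  · obtain ⟨g₁, hg₁T, hg₁inj, hg₁⟩ := exists_isGreedyOn h₁ S hST
    obtain ⟨g₂, hg₂T, hg₂inj, hg₂⟩ := exists_isGreedyOn h₂ Sᶜ hSTc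
    simp only [coe_compl] at hg₂T hg₂inj
    obtain ⟨w, hw₁, hw₂⟩ := exists_perm_eqOn_of_mapsTo hg₁T hg₁inj hg₂T hg₂inj
    refine ⟨w, fun i => ?_, hg₁.congr hw₁.symm, hg₂.congr (coe_compl S ▸ hw₂.symm)⟩
    by_cases hi : i ∈ S
    · simpa [hi, hw₁ (mem_coe.2 hi)] using hg₁T hi
    · have hi' : i ∈ (S : Set α)ᶜ := mem_coe.not.2 hi
      simpa [hi, hw₂ hi'] using hg₂T hi'
  · rintro w w' ⟨hwT, hw₁, hw₂⟩ ⟨hw'T, hw'₁, hw'₂⟩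
    have hS : Set.EqOn w w' S := IsGreedyOn.eqOn hST.ge (fun i hi => (hwT i).1 hi)
      w.injective.injOn hw₁ (fun i hi => (hw'T i).1 hi) w'.injective.injOn hw'₁
    have hSc : Set.EqOn w w' ↑Sᶜ :=
      IsGreedyOn.eqOn hSTc.ge (fun i hi => by simpa [hwT] using hi)
      w.injective.injOn hw₂ (fun i hi => by simpa [hw'T] using hi) w'.injective.injOn hw'₂
    ext i
    by_cases hi : i ∈ S
    · exact hS hi
    · exact hSc (by simpa using hi)

theorem existsUnique_perm_mul_isGreedyOn (p : α → Prop) (σ : Perm α)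
    (h₁ : ∀ i, Injective (key₁ i)) (h₂ : ∀ i, Injective (key₂ i)) :
    ∃! w : Perm α, (∃ u : Perm α, (∀ i, p i ↔ p (u i)) ∧ w = σ * u) ∧
      IsGreedyOn key₁ {i | p i} w ∧ IsGreedyOn key₂ {i | ¬ p i} w := by
  have hST : #(univ.filter p) = #((univ.filter p).map σ.toEmbedding) := (card_map _).symm
  refine (existsUnique_congr fun w => ?_).2 (existsUnique_perm_isGreedyOn h₁ h₂ hST)
  simp [exists_perm_mul_iff, mem_map_equiv, Perm.inv_def]

end Perm

section CircularOrder

variable {n : ℕ}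

theorem ne_and_not_circB_iff [NeZero n] {a b c : Fin n} (hbc : b ≠ c) :
    a ≠ b ∧ ¬ circB a b c ↔ c - a < b - a := by
  have hne : c - a ≠ b - a := fun h => hbc (sub_left_injective h).symm
  refine ⟨fun ⟨hab, h⟩ => (not_lt.1 fun h' => h ⟨Ne.symm hab, h'⟩).lt_of_ne hne,
    fun h => ⟨?_, fun h' => h'.2.asymm h⟩⟩
  rintro rfl
  simp at h

theorem ne_and_not_circBR_iff [NeZero n] {a b c : Fin n} (hbc : b ≠ c) :
    a ≠ b ∧ ¬ circBR a b c ↔ a - c < a - b := by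
  have hne : a - c ≠ a - b := fun h => hbc (sub_right_injective h).symm
  refine ⟨fun ⟨hab, h⟩ => (not_lt.1 fun h' => h ⟨Ne.symm hab, h'⟩).lt_of_ne hne,
    fun h => ⟨?_, fun h' => h'.2.asymm h⟩⟩
  rintro rfl
  simp at h

theorem forall_ne_and_not_circB_iff (k : ℕ) (v w : Perm (Fin n)) :
    (∀ i j : Fin n, k ≤ (j : ℕ) → j < i → v i ≠ w j ∧ ¬ circB (v i) (w j) (w i)) ↔
      IsGreedyOn (fun i x => x - v i) {i | ¬ (i : ℕ) < k} w := by
  refine ⟨fun h i _ j hj hji => ?_, fun h i j hj hji => ?_⟩ <;> have := NeZero.of_pos i.pos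
  · exact (ne_and_not_circB_iff (w.injective.ne hji.ne)).1 (h i j (not_lt.1 hj) hji)
  · refine (ne_and_not_circB_iff (w.injective.ne hji.ne)).2 (h i ?_ j (not_lt.2 hj) hji)
    show ¬ (i : ℕ) < k
    rw [Fin.lt_def] at hji
    omega

theorem forall_ne_and_not_circBR_iff (k : ℕ) (v w : Perm (Fin n)) :
    (∀ i j : Fin n, j < i → (i : ℕ) < k → v i ≠ w j ∧ ¬ circBR (v i) (w j) (w i)) ↔
      IsGreedyOn (fun i x => v i - x) {i | (i : ℕ) < k} w := by
  refine ⟨fun h i hi j _ hji => ?_, fun h i j hji hi => ?_⟩ <;> have := NeZero.of_pos i.pos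
  · exact (ne_and_not_circBR_iff (w.injective.ne hji.ne)).1 (h i j hji hi)
  · refine (ne_and_not_circBR_iff (w.injective.ne hji.ne)).2 (h i hi j ?_ hji)
    show (j : ℕ) < k
    rw [Fin.lt_def] at hji
    omega

end CircularOrder

theorem stmt13_general {n k : ℕ} (v σ : Equiv.Perm (Fin n)) :
    ∃! w : Equiv.Perm (Fin n),
      (∃ u : Equiv.Perm (Fin n),
        (∀ i : Fin n, (i : ℕ) < k ↔ (u i : ℕ) < k) ∧ w = σ * u) ∧
      (∀ i j : Fin n, k ≤ (j : ℕ) → j < i →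
        v i ≠ w j ∧ ¬ circB (v i) (w j) (w i)) ∧
      (∀ i j : Fin n, j < i → (i : ℕ) < k →
        v i ≠ w j ∧ ¬ circBR (v i) (w j) (w i)) := by
  -- `Fin n` is an additive group only for `n ≠ 0`, which any `i : Fin n` witnesses.
  have hkey₁ : ∀ i : Fin n, Injective fun x => v i - x := fun i =>
    have := NeZero.of_pos i.pos; sub_right_injective
  have hkey₂ : ∀ i : Fin n, Injective fun x => x - v i := fun i =>
    have := NeZero.of_pos i.pos; sub_left_injective
  refine (existsUnique_congr fun w => ?_).2
    (existsUnique_perm_mul_isGreedyOn (fun i : Fin n => (i : ℕ) < k) σ hkey₁ hkey₂)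
  rw [forall_ne_and_not_circB_iff, forall_ne_and_not_circBR_iff]
  exact and_congr_right' and_comm

/-- For `v ∈ S_n` and a coset `σ W_J` of the parabolic subgroup
`W_J = S_k × S_{n-k}` (permutations of positions preserving `{1,…,k}`), there is a
unique `w ∈ σ W_J` such that, for every pair of positions `k+1 ≤ j < i ≤ n`
(1-indexed), `v(i) ≠ w(j)` and `w(j)` does not lie strictly between `v(i)` and `w(i)`
in the circular order starting at `v(i)`, and analogously for positions
`1 ≤ j < i ≤ k` with the reverse circular order. -/
theorem stmt13 {n k : ℕ} (hk1 : 1 ≤ k) (hk2 : k ≤ n - 1)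
    (v σ : Equiv.Perm (Fin n)) :
    ∃! w : Equiv.Perm (Fin n),
      (∃ u : Equiv.Perm (Fin n),
        (∀ i : Fin n, (i : ℕ) < k ↔ (u i : ℕ) < k) ∧ w = σ * u) ∧
      (∀ i j : Fin n, k ≤ (j : ℕ) → j < i →
        v i ≠ w j ∧ ¬ circB (v i) (w j) (w i)) ∧
      (∀ i j : Fin n, j < i → (i : ℕ) < k →
        v i ≠ w j ∧ ¬ circBR (v i) (w j) (w i)) :=
  stmt13_general v σ
end
end

section
/- Let W be a finite Weyl group, and for each positive root β that is not simple, let Q_β be the operator on the free module with basis { [w t_ξ] : w ∈ W, ξ ∈ Q^{∨,+} } defined by Q_β[w t_ξ] = [w s_β t_ξ] if w → w s_β is a Bruhat edge in QB(W), Q_β[w t_ξ] = [w s_β t_{ξ+β^∨}] if it is a quantum edge, and 0 otherwise. Then Q_β² = 0. -/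
open scoped RealInnerProductSpace Classical

noncomputable section

/-- Ambient Euclidean space. -/
abbrev EV (d : ℕ) := EuclideanSpace ℝ (Fin d)

/-- The pairing `⟨x, β^∨⟩ = 2(x,β)/(β,β)`. -/
def pairCo {d : ℕ} (β x : EV d) : ℝ := 2 * (inner ℝ x β : ℝ) / (inner ℝ β β : ℝ)

/-- Reflection in the hyperplane orthogonal to `β`. -/
def reflFun {d : ℕ} (β : EV d) (v : EV d) : EV d := v - pairCo β v • β

lemma reflFun_involutive {d : ℕ} (β : EV d) : Function.Involutive (reflFun β) := by
  intro v
  by_cases h : ((inner ℝ β β : ℝ)) = 0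
  · have hβ : β = 0 := inner_self_eq_zero.mp h
    simp [reflFun, pairCo, hβ]
  · have key : pairCo β (reflFun β v) = - pairCo β v := by
      simp only [reflFun, pairCo, inner_sub_left, real_inner_smul_left]
      set a : ℝ := inner ℝ v β
      set b : ℝ := inner ℝ β β
      field_simp
      ring
    calc reflFun β (reflFun β v)
        = reflFun β v - pairCo β (reflFun β v) • β := rfl
      _ = (v - pairCo β v • β) - (- pairCo β v) • β := by rw [key]; rfl
      _ = v := by module

/-- The reflection `s_β` as a permutation of the ambient space. -/
def sPerm {d : ℕ} (β : EV d) : Equiv.Perm (EV d) := (reflFun_involutive β).toPerm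

/-- The Weyl group: the subgroup generated by the reflections in the roots of `Φ`. -/
def weylGroup {d : ℕ} (Φ : Finset (EV d)) : Subgroup (Equiv.Perm (EV d)) :=
  Subgroup.closure {p | ∃ β ∈ Φ, p = sPerm β}

/-- Length of `w`: the number of positive roots sent by `w` to negative roots. -/
def len {d : ℕ} (Φp : Finset (EV d)) (w : Equiv.Perm (EV d)) : ℕ :=
  (Φp.filter (fun α => -(w α) ∈ Φp)).card

/-- The half-sum of the positive roots. -/
def rho {d : ℕ} (Φp : Finset (EV d)) : EV d := (1/2 : ℝ) • ∑ α ∈ Φp, α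

/-- The coroot `β^∨`. -/
def coroot {d : ℕ} (β : EV d) : EV d := (2 / (inner ℝ β β : ℝ)) • β

/-- Bruhat edge `w → w s_β` of the quantum Bruhat graph: `ℓ(w s_β) = ℓ(w) + 1`. -/
def BruhatEdge {d : ℕ} (Φp : Finset (EV d)) (w : Equiv.Perm (EV d)) (β : EV d) : Prop :=
  len Φp (w * sPerm β) = len Φp w + 1

/-- Quantum edge `w → w s_β`: `ℓ(w s_β) = ℓ(w) + 1 - 2⟨ρ, β^∨⟩`. -/
def QuantumEdge {d : ℕ} (Φp : Finset (EV d)) (w : Equiv.Perm (EV d)) (β : EV d) : Prop :=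
  (len Φp (w * sPerm β) : ℝ) + 2 * pairCo β (rho Φp) = (len Φp w : ℝ) + 1

/-- Edge of the quantum Bruhat graph labeled by a positive root `β`. -/
def QBGEdge {d : ℕ} (Φp : Finset (EV d)) (w : Equiv.Perm (EV d)) (β : EV d) : Prop :=
  β ∈ Φp ∧ (BruhatEdge Φp w β ∨ QuantumEdge Φp w β)

/-- `IsQBGPath Φp w bs v`: `bs` is the list of labels of a directed path
from `w` to `v` in the quantum Bruhat graph. -/
def IsQBGPath {d : ℕ} (Φp : Finset (EV d)) :
    Equiv.Perm (EV d) → List (EV d) → Equiv.Perm (EV d) → Prop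
  | w, [], v => w = v
  | w, β :: bs, v => QBGEdge Φp w β ∧ IsQBGPath Φp (w * sPerm β) bs v

/-- The weight of a path: the sum of the coroots `β^∨` over its quantum edges. -/
def pathWt {d : ℕ} (Φp : Finset (EV d)) :
    Equiv.Perm (EV d) → List (EV d) → EV d
  | _, [] => 0
  | w, β :: bs => (if QuantumEdge Φp w β then coroot β else 0) + pathWt Φp (w * sPerm β) bs

/-- Axioms for a finite crystallographic reduced root system `Φ`
with a choice of positive system `Φp`. -/
structure IsRootSystem {d : ℕ} (Φ Φp : Finset (EV d)) : Prop where
  zero_not_mem : (0 : EV d) ∉ Φ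
  refl_mem : ∀ α ∈ Φ, ∀ β ∈ Φ, reflFun α β ∈ Φ
  crys : ∀ α ∈ Φ, ∀ β ∈ Φ, ∃ z : ℤ, (z : ℝ) = pairCo α β
  reduced : ∀ α ∈ Φ, ∀ t : ℝ, t • α ∈ Φ → t = 1 ∨ t = -1
  pos_subset : Φp ⊆ Φ
  pos_or_neg : ∀ α ∈ Φ, α ∈ Φp ∨ -α ∈ Φp
  pos_not_neg : ∀ α ∈ Φp, -α ∉ Φp
  pos_add : ∀ α ∈ Φp, ∀ β ∈ Φp, α + β ∈ Φ → α + β ∈ Φp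

/-- The simple roots: positive roots that are not sums of two positive roots. -/
def simpleRoots {d : ℕ} (Φp : Finset (EV d)) : Set (EV d) :=
  {α | α ∈ Φp ∧ ¬ ∃ β ∈ Φp, ∃ γ ∈ Φp, α = β + γ}

/-- The cone `Q^{∨,+}` of nonnegative integer combinations of the positive coroots. -/
def posCorootCone {d : ℕ} (Φp : Finset (EV d)) : AddSubmonoid (EV d) :=
  AddSubmonoid.closure {x | ∃ β ∈ Φp, x = coroot β}

/-- The free `ℤ`-module with basis `[w t_ξ]`, `w ∈ W`, `ξ ∈ Q^{∨,+}`. -/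
abbrev QModule {d : ℕ} (Φp : Finset (EV d)) : Type _ :=
  (Equiv.Perm (EV d) × posCorootCone Φp) →₀ ℤ

/-- The image of the basis element `[w t_ξ]` under the quantum Bruhat operator `Q_β`. -/
noncomputable def Qimage {d : ℕ} (Φp : Finset (EV d)) (β : EV d) (hβ : β ∈ Φp)
    (p : Equiv.Perm (EV d) × posCorootCone Φp) : QModule Φp :=
  if BruhatEdge Φp p.1 β then Finsupp.single (p.1 * sPerm β, p.2) 1
  else if QuantumEdge Φp p.1 β then
    Finsupp.single
      (p.1 * sPerm β, p.2 + ⟨coroot β, AddSubmonoid.subset_closure ⟨β, hβ, rfl⟩⟩) 1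
  else 0

/-- The quantum Bruhat operator `Q_β`. -/
noncomputable def Qop {d : ℕ} (Φp : Finset (EV d)) (β : EV d) (hβ : β ∈ Φp) :
    QModule Φp →ₗ[ℤ] QModule Φp :=
  Finsupp.lsum ℤ fun p => LinearMap.toSpanSingleton ℤ (QModule Φp) (Qimage Φp β hβ p)

/-!
`Q_β² [w t_ξ]` can only be nonzero if the quantum Bruhat graph has both edges `w → w s_β` and
`w s_β → w`. Comparing the length conditions, two such edges force `⟨ρ, β^∨⟩ = 1` or
`⟨ρ, β^∨⟩ = 1/2`. But `⟨ρ, β^∨⟩ > 1` when `β` is not simple: in `2(ρ, β) = ∑_{α > 0} (α, β)` the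
positive roots kept positive by `s_β` cancel, since `s_β` permutes them and negates their
pairing with `β`; the positive roots made negative by `s_β` all pair positively with `β`, and
when `β = γ + δ` is not simple, one of `γ, δ` is such a root besides `β` itself.
-/

section Reflection

variable {d : ℕ}

lemma pairCo_add (β x y : EV d) : pairCo β (x + y) = pairCo β x + pairCo β y := by
  simp only [pairCo, inner_add_left]; ring

lemma pairCo_mul_inner_self {β : EV d} (hβ : β ≠ 0) (x : EV d) :
    pairCo β x * ⟪β, β⟫ = 2 * ⟪x, β⟫ :=
  div_mul_cancel₀ _ (real_inner_self_pos.mpr hβ).ne'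

lemma pairCo_self {β : EV d} (hβ : β ≠ 0) : pairCo β β = 2 := by
  rw [pairCo, mul_div_assoc, div_self (real_inner_self_pos.mpr hβ).ne', mul_one]

lemma reflFun_add (β x y : EV d) : reflFun β (x + y) = reflFun β x + reflFun β y := by
  simp only [reflFun, pairCo_add, add_smul]; abel

lemma reflFun_self {β : EV d} (hβ : β ≠ 0) : reflFun β β = -β := by
  rw [reflFun, pairCo_self hβ]; module

lemma inner_reflFun_left {β : EV d} (hβ : β ≠ 0) (v : EV d) :
    ⟪reflFun β v, β⟫ = -⟪v, β⟫ := by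
  rw [reflFun, inner_sub_left, real_inner_smul_left, pairCo_mul_inner_self hβ]; ring

lemma sPerm_mul_self (β : EV d) : sPerm β * sPerm β = 1 :=
  Equiv.ext (reflFun_involutive β)

end Reflection

namespace IsRootSystem

variable {d : ℕ} {Φ Φp : Finset (EV d)} {α β : EV d}

lemma ne_zero (hRS : IsRootSystem Φ Φp) (hα : α ∈ Φ) : α ≠ 0 := by
  rintro rfl; exact hRS.zero_not_mem hα

lemma neg_mem (hRS : IsRootSystem Φ Φp) (hα : α ∈ Φ) : -α ∈ Φ := by
  simpa only [reflFun_self (hRS.ne_zero hα)] using hRS.refl_mem α hα α hα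

lemma inner_mul_inner_lt (hRS : IsRootSystem Φ Φp) (hα : α ∈ Φ) (hβ : β ∈ Φ)
    (h₁ : β ≠ α) (h₂ : β ≠ -α) : ⟪α, β⟫ * ⟪α, β⟫ < ⟪α, α⟫ * ⟪β, β⟫ := by
  have hlt : |⟪α, β⟫| < ‖α‖ * ‖β‖ := by
    refine (abs_real_inner_le_norm α β).lt_of_ne fun h => ?_
    obtain ⟨r, -, hr⟩ :=
      (norm_inner_eq_norm_iff (𝕜 := ℝ) (hRS.ne_zero hα) (hRS.ne_zero hβ)).mp h
    rcases hRS.reduced α hα r (hr ▸ hβ) with rfl | rfl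
    · exact h₁ (by rw [hr, one_smul])
    · exact h₂ (by rw [hr, neg_one_smul])
  rw [real_inner_self_eq_norm_mul_norm, real_inner_self_eq_norm_mul_norm, ← abs_mul_abs_self]
  nlinarith [abs_nonneg ⟪α, β⟫]

lemma pairCo_mul_pairCo_lt_four (hRS : IsRootSystem Φ Φp) (hα : α ∈ Φ) (hβ : β ∈ Φ)
    (h₁ : β ≠ α) (h₂ : β ≠ -α) : pairCo α β * pairCo β α < 4 := by
  have hαα := real_inner_self_pos.mpr (hRS.ne_zero hα)
  have hββ := real_inner_self_pos.mpr (hRS.ne_zero hβ)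
  rw [pairCo, pairCo, real_inner_comm α β, div_mul_div_comm, div_lt_iff₀ (by positivity)]
  nlinarith [hRS.inner_mul_inner_lt hα hβ h₁ h₂]

/-- The two pairings of `α, β` are integers of the same sign with product `< 4`, so one of them
is `-1`, and `α + β` is `s_β α` or `s_α β`. -/
lemma add_mem_of_pairCo_neg (hRS : IsRootSystem Φ Φp) (hα : α ∈ Φ) (hβ : β ∈ Φ)
    (h₁ : β ≠ α) (h₂ : β ≠ -α) (hneg : pairCo β α < 0) : α + β ∈ Φ := by
  obtain ⟨z, hz⟩ := hRS.crys β hβ α hα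
  obtain ⟨m, hm⟩ := hRS.crys α hα β hβ
  have hsign : pairCo α β * ⟪α, α⟫ = pairCo β α * ⟪β, β⟫ := by
    rw [pairCo_mul_inner_self (hRS.ne_zero hα), pairCo_mul_inner_self (hRS.ne_zero hβ),
      real_inner_comm]
  have hαα := real_inner_self_pos.mpr (hRS.ne_zero hα)
  have hββ := real_inner_self_pos.mpr (hRS.ne_zero hβ)
  have hz_neg : z < 0 := by exact_mod_cast hz ▸ hneg
  have hm_neg : m < 0 := by
    have : pairCo α β < 0 := by nlinarith
    exact_mod_cast hm ▸ this
  have hmz : m * z < 4 := by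
    exact_mod_cast hm ▸ hz ▸ hRS.pairCo_mul_pairCo_lt_four hα hβ h₁ h₂
  have hone : z = -1 ∨ m = -1 := by
    by_contra! h
    obtain ⟨hz2, hm2⟩ : z ≤ -2 ∧ m ≤ -2 := by omega
    nlinarith
  rcases hone with hz1 | hm1
  · have : reflFun β α = α + β := by rw [reflFun, ← hz, hz1]; push_cast; module
    exact this ▸ hRS.refl_mem β hβ α hα
  · have : reflFun α β = α + β := by rw [reflFun, ← hm, hm1]; push_cast; module
    exact this ▸ hRS.refl_mem α hα β hβ

/-- Induction on `n` in steps of two: for `n ≥ 2`, `α + β` is again a positive root, with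
`⟨α + β, β^∨⟩ = -(n - 2)` and `s_β α = s_β (α + β) + β`. -/
lemma reflFun_mem_of_pairCo_eq_neg_natCast (hRS : IsRootSystem Φ Φp) (hβ : β ∈ Φp) (n : ℕ) :
    ∀ {α}, α ∈ Φp → pairCo β α = -n → reflFun β α ∈ Φp := by
  have hβΦ := hRS.pos_subset hβ
  have hβ0 := hRS.ne_zero hβΦ
  induction n using Nat.twoStepInduction with
  | zero =>
    intro α hα h
    simpa [reflFun, h] using hα
  | one =>
    intro α hα h
    have : reflFun β α = α + β := by rw [reflFun, h]; push_cast; module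
    exact this ▸ hRS.pos_add α hα β hβ (this ▸ hRS.refl_mem β hβΦ α (hRS.pos_subset hα))
  | more n ih _ =>
    intro α hα h
    have hαΦ := hRS.pos_subset hα
    have hne : β ≠ α := by
      rintro rfl
      rw [pairCo_self hβ0] at h
      linarith [(n.cast_nonneg : (0 : ℝ) ≤ n)]
    have hne' : β ≠ -α := by
      rintro rfl
      exact hRS.pos_not_neg α hα hβ
    have hsum : α + β ∈ Φp :=
      hRS.pos_add α hα β hβ <|
        hRS.add_mem_of_pairCo_neg hαΦ hβΦ hne hne' (by rw [h]; push_cast; linarith)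
    have hpair : pairCo β (α + β) = -n := by
      rw [pairCo_add, pairCo_self hβ0, h]; push_cast; ring
    have hstring : reflFun β (α + β) + β = reflFun β α := by
      rw [reflFun_add, reflFun_self hβ0]; abel
    exact hstring ▸ hRS.pos_add _ (ih hsum hpair) β hβ (hstring ▸ hRS.refl_mem β hβΦ α hαΦ)

lemma inner_pos_of_reflFun_notMem (hRS : IsRootSystem Φ Φp) (hβ : β ∈ Φp) (hα : α ∈ Φp)
    (hN : reflFun β α ∉ Φp) : 0 < ⟪α, β⟫ := by
  by_contra! hle
  obtain ⟨z, hz⟩ := hRS.crys β (hRS.pos_subset hβ) α (hRS.pos_subset hα)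
  have hββ := real_inner_self_pos.mpr (hRS.ne_zero (hRS.pos_subset hβ))
  have hz_nonpos : z ≤ 0 := by
    have : pairCo β α ≤ 0 := div_nonpos_of_nonpos_of_nonneg (by linarith) hββ.le
    exact_mod_cast hz ▸ this
  refine hN (hRS.reflFun_mem_of_pairCo_eq_neg_natCast hβ (-z).toNat hα ?_)
  rw [← hz]
  exact_mod_cast (by omega : z = -((-z).toNat : ℤ))

lemma exists_reflFun_notMem_of_notMem_simpleRoots (hRS : IsRootSystem Φ Φp) (hβ : β ∈ Φp)
    (hns : β ∉ simpleRoots Φp) : ∃ α ∈ Φp, α ≠ β ∧ reflFun β α ∉ Φp := by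
  have hβΦ := hRS.pos_subset hβ
  obtain ⟨γ, hγ, δ, hδ, rfl⟩ : ∃ γ ∈ Φp, ∃ δ ∈ Φp, β = γ + δ := by
    by_contra h
    exact hns ⟨hβ, h⟩
  by_contra! h
  have hγ' := h γ hγ (fun e => hRS.ne_zero (hRS.pos_subset hδ) (by simpa using e.symm))
  have hδ' := h δ hδ (fun e => hRS.ne_zero (hRS.pos_subset hγ) (by simpa using e.symm))
  have hneg : reflFun (γ + δ) γ + reflFun (γ + δ) δ = -(γ + δ) := by
    rw [← reflFun_add, reflFun_self (hRS.ne_zero hβΦ)]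
  exact hRS.pos_not_neg _ hβ
    (hneg ▸ hRS.pos_add _ hγ' _ hδ' (hneg ▸ hRS.neg_mem hβΦ))

lemma one_lt_pairCo_rho (hRS : IsRootSystem Φ Φp) (hβ : β ∈ Φp) (hns : β ∉ simpleRoots Φp) :
    1 < pairCo β (rho Φp) := by
  have hβ0 := hRS.ne_zero (hRS.pos_subset hβ)
  have hββ := real_inner_self_pos.mpr hβ0
  set N := Φp.filter (fun α => reflFun β α ∉ Φp)
  have hkept : ∑ α ∈ Φp.filter (fun α => reflFun β α ∈ Φp), ⟪α, β⟫ = 0 := by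
    refine Finset.sum_involution (fun α _ => reflFun β α) (fun α _ => ?_)
      (fun α _ hne hfix => hne ?_) (fun α hα => ?_) (fun α _ => reflFun_involutive β α)
    · rw [inner_reflFun_left hβ0]; ring
    · have := inner_reflFun_left hβ0 α
      rw [hfix] at this
      linarith
    · rw [Finset.mem_filter] at hα ⊢
      exact ⟨hα.2, by rw [reflFun_involutive β α]; exact hα.1⟩
  have hβN : β ∈ N := by
    simp only [N, Finset.mem_filter, reflFun_self hβ0]
    exact ⟨hβ, hRS.pos_not_neg β hβ⟩
  have hrest : 0 < ∑ α ∈ N.erase β, ⟪α, β⟫ := by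
    obtain ⟨α₀, hα₀, hne, hα₀N⟩ := hRS.exists_reflFun_notMem_of_notMem_simpleRoots hβ hns
    refine Finset.sum_pos (fun α hα => ?_) ⟨α₀, by simp [N, hne, hα₀, hα₀N]⟩
    simp only [N, Finset.mem_erase, Finset.mem_filter] at hα
    exact hRS.inner_pos_of_reflFun_notMem hβ hα.2.1 hα.2.2
  have hsum : ∑ α ∈ Φp, ⟪α, β⟫ = ⟪β, β⟫ + ∑ α ∈ N.erase β, ⟪α, β⟫ := by
    rw [← Finset.sum_filter_add_sum_filter_not Φp (fun α => reflFun β α ∈ Φp), hkept, zero_add]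
    exact (Finset.add_sum_erase N _ hβN).symm
  rw [pairCo, lt_div_iff₀ hββ, rho, real_inner_smul_left, sum_inner, hsum]
  linarith

end IsRootSystem

section QuantumBruhat

variable {d : ℕ} {Φp : Finset (EV d)} {β : EV d}

lemma not_edge_mul_sPerm_of_edge (hρ : 1 < pairCo β (rho Φp)) {w : Equiv.Perm (EV d)}
    (h : BruhatEdge Φp w β ∨ QuantumEdge Φp w β) :
    ¬ BruhatEdge Φp (w * sPerm β) β ∧ ¬ QuantumEdge Φp (w * sPerm β) β := by
  simp only [BruhatEdge, QuantumEdge, mul_assoc, sPerm_mul_self, mul_one,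
    ← Nat.cast_inj (R := ℝ), Nat.cast_add, Nat.cast_one] at h ⊢
  rcases h with h | h <;> constructor <;> intro h' <;> linarith

lemma Qop_single (hβ : β ∈ Φp) (p : Equiv.Perm (EV d) × posCorootCone Φp) (n : ℤ) :
    Qop Φp β hβ (Finsupp.single p n) = n • Qimage Φp β hβ p := by
  rw [Qop, Finsupp.lsum_single, LinearMap.toSpanSingleton_apply]

lemma Qimage_eq_zero (hβ : β ∈ Φp) {p : Equiv.Perm (EV d) × posCorootCone Φp}
    (h : ¬ BruhatEdge Φp p.1 β ∧ ¬ QuantumEdge Φp p.1 β) : Qimage Φp β hβ p = 0 := by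
  rw [Qimage, if_neg h.1, if_neg h.2]

lemma Qop_Qimage_eq_zero (hβ : β ∈ Φp) (hρ : 1 < pairCo β (rho Φp))
    (p : Equiv.Perm (EV d) × posCorootCone Φp) : Qop Φp β hβ (Qimage Φp β hβ p) = 0 := by
  obtain ⟨w, ξ⟩ := p
  rw [Qimage]
  split_ifs with hB hQ
  · rw [Qop_single, Qimage_eq_zero hβ (p := (w * sPerm β, ξ))
      (not_edge_mul_sPerm_of_edge hρ (.inl hB)), smul_zero]
  · rw [Qop_single, Qimage_eq_zero hβ (p := (w * sPerm β, _))
      (not_edge_mul_sPerm_of_edge hρ (.inr hQ)), smul_zero]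
  · exact map_zero _

lemma Qop_comp_self_eq_zero (hβ : β ∈ Φp) (hρ : 1 < pairCo β (rho Φp)) :
    Qop Φp β hβ ∘ₗ Qop Φp β hβ = 0 := by
  refine Finsupp.lhom_ext fun p n => ?_
  rw [LinearMap.comp_apply, Qop_single, map_zsmul, Qop_Qimage_eq_zero hβ hρ, smul_zero,
    LinearMap.zero_apply]

end QuantumBruhat

/-- For a positive root `β` that is not simple, the quantum Bruhat
operator satisfies `Q_β² = 0`. -/
theorem stmt15 {d : ℕ} (Φ Φp : Finset (EV d)) (hRS : IsRootSystem Φ Φp)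
    (β : EV d) (hβ : β ∈ Φp) (hns : β ∉ simpleRoots Φp) :
    Qop Φp β hβ ∘ₗ Qop Φp β hβ = 0 :=
  Qop_comp_self_eq_zero hβ (hRS.one_lt_pairCo_rho hβ hns)
end
end
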